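/- Let G be a connected graph (possibly countably infinite) and T a spanning tree of G rooted at a vertex Φ. For every edge e = (Ψ, Υ) of G not in T, let β_e denote the closed walk at Φ obtained by concatenating the unique path in T from Φ to Ψ, the edge e, and the unique path in T from Υ back to Φ. Then every closed walk at Φ is homotopic (relative to insertions and deletions of backtracking subwalks of the form x·x⁻¹) to a concatenation of walks of the form β_e and their reverses. -/

import Mathlib

/-!
Fix in the spanning tree `T` the path `P v` from the root `Φ` to each vertex `v`, and send a
walk `w` from `u` to `v` to the loop `P u · w · (P v)⁻¹` at `Φ`. Inserting `(P x)⁻¹ · P x` after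
each vertex `x` of `w` shows that this loop is equivalent to the product of the loops of the
single edges of `w`. For a tree edge `u x` one of the paths `P u`, `P x` extends the other by
that edge, so its loop collapses to the empty walk; the loop of a non-tree edge is `β` of that
edge, by uniqueness of paths in a tree. A closed walk at `Φ` is its own loop,
since `P Φ` is empty.
-/

open SimpleGraph

/-- Equivalence of walks under insertion/deletion of immediate backtracks. -/
inductive WalkEquiv {V : Type*} {G : SimpleGraph V} :
    ∀ {u v : V}, G.Walk u v → G.Walk u v → Prop
  | refl {u v : V} (p : G.Walk u v) : WalkEquiv p p
  | symm {u v : V} {p q : G.Walk u v} : WalkEquiv p q → WalkEquiv q p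
  | trans {u v : V} {p q r : G.Walk u v} : WalkEquiv p q → WalkEquiv q r → WalkEquiv p r
  | backtrack {u w x v : V} (p : G.Walk u w) (h : G.Adj w x) (q : G.Walk w v) :
      WalkEquiv (p.append q) (p.append (Walk.cons h (Walk.cons h.symm q)))

namespace WalkEquiv

variable {V V' : Type*} {G : SimpleGraph V} {G' : SimpleGraph V'}

lemma append_right {u v w : V} {p q : G.Walk u v} (he : WalkEquiv p q) (r : G.Walk v w) :
    WalkEquiv (p.append r) (q.append r) := by
  induction he with
  | refl => exact .refl _
  | symm _ ih => exact (ih r).symm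
  | trans _ _ ih₁ ih₂ => exact (ih₁ r).trans (ih₂ r)
  | backtrack p h q =>
    rw [← Walk.append_assoc, ← Walk.append_assoc, Walk.cons_append, Walk.cons_append]
    exact .backtrack p h (q.append r)

lemma append_left {u v w : V} (r : G.Walk u v) {p q : G.Walk v w} (he : WalkEquiv p q) :
    WalkEquiv (r.append p) (r.append q) := by
  induction he with
  | refl => exact .refl _
  | symm _ ih => exact ih.symm
  | trans _ _ ih₁ ih₂ => exact ih₁.trans ih₂
  | backtrack p h q =>
    rw [Walk.append_assoc, Walk.append_assoc]
    exact .backtrack (r.append p) h q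

lemma map (f : G →g G') {u v : V} {p q : G.Walk u v} (he : WalkEquiv p q) :
    WalkEquiv (p.map f) (q.map f) := by
  induction he with
  | refl => exact .refl _
  | symm _ ih => exact ih.symm
  | trans _ _ ih₁ ih₂ => exact ih₁.trans ih₂
  | backtrack p h q =>
    rw [Walk.map_append, Walk.map_append, Walk.map_cons, Walk.map_cons]
    exact .backtrack (p.map f) (f.map_adj h) (q.map f)

end WalkEquiv

section Cancellation

variable {V : Type*} {G : SimpleGraph V}

lemma walkEquiv_reverse_append {u v : V} (p : G.Walk u v) :
    WalkEquiv (p.reverse.append p) Walk.nil := by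
  induction p with
  | nil => exact .refl _
  | cons h p ih =>
    rw [Walk.reverse_cons, ← Walk.append_assoc, Walk.cons_nil_append]
    exact (WalkEquiv.backtrack p.reverse h.symm p).symm.trans ih

lemma walkEquiv_append_reverse {u v : V} (p : G.Walk u v) :
    WalkEquiv (p.append p.reverse) Walk.nil := by
  simpa only [Walk.reverse_reverse] using walkEquiv_reverse_append p.reverse

lemma walkEquiv_append_cons_cons_reverse {u v w : V} (p : G.Walk u v) (h : G.Adj v w) :
    WalkEquiv (p.append (Walk.cons h (Walk.cons h.symm p.reverse))) Walk.nil :=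
  (WalkEquiv.backtrack p h p.reverse).symm.trans (walkEquiv_append_reverse p)

end Cancellation

namespace SimpleGraph.IsAcyclic

variable {V : Type*} {T : SimpleGraph V}

lemma eq_of_isPath (hT : T.IsAcyclic) {u v : V} {p q : T.Walk u v} (hp : p.IsPath)
    (hq : q.IsPath) : p = q :=
  congrArg Subtype.val ((hT.subsingleton_path u v).elim ⟨p, hp⟩ ⟨q, hq⟩)

lemma eq_concat_or_eq_concat (hT : T.IsAcyclic) {r u x : V} {p : T.Walk r u} {q : T.Walk r x}
    (hp : p.IsPath) (hq : q.IsPath) (h : T.Adj u x) :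
    q = p.concat h ∨ p = q.concat h.symm := by
  by_cases hx : x ∈ p.support
  · exact .inr (hT.path_concat hq hp h.symm hx)
  · exact .inl (hT.path_concat hp hq h
      (hT.mem_support_of_ne_mem_support_of_adj_of_isPath hq hp h.symm hx))

lemma walkEquiv_append_cons_reverse (hT : T.IsAcyclic) {r u x : V} {p : T.Walk r u}
    {q : T.Walk r x} (hp : p.IsPath) (hq : q.IsPath) (h : T.Adj u x) :
    WalkEquiv (p.append (Walk.cons h q.reverse)) Walk.nil := by
  rcases hT.eq_concat_or_eq_concat hp hq h with rfl | rfl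
  · rw [Walk.reverse_concat]
    exact walkEquiv_append_cons_cons_reverse p h
  · rw [Walk.concat_append]
    exact walkEquiv_append_cons_cons_reverse q h.symm

end SimpleGraph.IsAcyclic

section TreeLoop

variable {V : Type*} {G T : SimpleGraph V} (hle : T ≤ G) {Φ : V} (P : ∀ v, T.Walk Φ v)

def treeLoop {u v : V} (w : G.Walk u v) : G.Walk Φ Φ :=
  ((P u).mapLe hle).append (w.append ((P v).mapLe hle).reverse)

lemma walkEquiv_treeLoop_nil (v : V) : WalkEquiv (treeLoop hle P (Walk.nil : G.Walk v v)) .nil :=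
  walkEquiv_append_reverse _

lemma walkEquiv_treeLoop_cons {u x v : V} (h : G.Adj u x) (w : G.Walk x v) :
    WalkEquiv (treeLoop hle P (Walk.cons h w))
      ((treeLoop hle P (Walk.cons h .nil)).append (treeLoop hle P w)) := by
  have hcancel := (walkEquiv_reverse_append ((P x).mapLe hle)).append_right
    (w.append ((P v).mapLe hle).reverse)
  simp only [Walk.nil_append, ← Walk.append_assoc] at hcancel
  simpa only [treeLoop, Walk.cons_append, Walk.nil_append, ← Walk.append_assoc] using
    (WalkEquiv.append_left ((P u).mapLe hle) (hcancel.symm.append_left (.cons h .nil)))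

variable {P}

lemma walkEquiv_treeLoop_of_adj (hT : T.IsAcyclic) (hP : ∀ v, (P v).IsPath) {u x : V}
    (h : G.Adj u x) (ht : T.Adj u x) : WalkEquiv (treeLoop hle P (Walk.cons h .nil)) .nil := by
  simpa [treeLoop, Walk.mapLe, Walk.reverse_map] using
    (hT.walkEquiv_append_cons_reverse (hP u) (hP x) ht).map (Hom.ofLE hle)

lemma exists_walkEquiv_treeLoop_foldr (hT : T.IsAcyclic) (hP : ∀ v, (P v).IsPath) {u v : V}
    (w : G.Walk u v) :
    ∃ L : List (G.Walk Φ Φ),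
      (∀ γ ∈ L, ∃ (a b : V) (h : G.Adj a b), ¬ T.Adj a b ∧ γ = treeLoop hle P (.cons h .nil)) ∧
      WalkEquiv (treeLoop hle P w) (L.foldr Walk.append Walk.nil) := by
  induction w with
  | nil => exact ⟨[], by simp, walkEquiv_treeLoop_nil hle P _⟩
  | @cons a b _ h w ih =>
    obtain ⟨L, hL, hw⟩ := ih
    have hsplit := (walkEquiv_treeLoop_cons hle P h w).trans (hw.append_left _)
    by_cases ht : T.Adj a b
    · exact ⟨L, hL, hsplit.trans ((walkEquiv_treeLoop_of_adj hle hT hP h ht).append_right _)⟩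
    · exact ⟨_ :: L, List.forall_mem_cons.2 ⟨⟨a, b, h, ht, rfl⟩, hL⟩, hsplit⟩

lemma mapLe_append_cons_eq_treeLoop (hT : T.IsAcyclic) (hP : ∀ v, (P v).IsPath) {u v : V}
    {p : T.Walk Φ u} {q : T.Walk v Φ} (hp : p.IsPath) (hq : q.IsPath) (h : G.Adj u v) :
    (p.mapLe hle).append (Walk.cons h (q.mapLe hle)) = treeLoop hle P (.cons h .nil) := by
  rw [hT.eq_of_isPath hp (hP u), ← q.reverse_reverse, hT.eq_of_isPath hq.reverse (hP v)]
  simp [treeLoop]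

end TreeLoop

theorem closed_walk_is_concatenation_of_fundamental_cycles_general
    {V : Type*} (G T : SimpleGraph V) (hle : T ≤ G)
    (hT : T.IsTree) (Φ : V)
    (β : ∀ ⦃u v : V⦄, G.Adj u v → ¬ T.Adj u v → G.Walk Φ Φ)
    (hβ : ∀ ⦃u v : V⦄ (h : G.Adj u v) (hn : ¬ T.Adj u v),
      ∃ (p : T.Walk Φ u) (q : T.Walk v Φ), p.IsPath ∧ q.IsPath ∧
        β h hn = ((p.mapLe hle).append (Walk.cons h (q.mapLe hle)))) :
    ∀ w : G.Walk Φ Φ, ∃ L : List (G.Walk Φ Φ),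
      (∀ x ∈ L, (∃ (u v : V) (h : G.Adj u v) (hn : ¬ T.Adj u v), x = β h hn) ∨
        (∃ (u v : V) (h : G.Adj u v) (hn : ¬ T.Adj u v), x = (β h hn).reverse)) ∧
      WalkEquiv w (L.foldr Walk.append Walk.nil) := by
  intro w
  choose P hP using fun v => (hT.existsUnique_path Φ v).exists
  obtain ⟨L, hL, hw⟩ := exists_walkEquiv_treeLoop_foldr hle hT.isAcyclic hP w
  refine ⟨L, fun γ hγ => ?_, ?_⟩
  · obtain ⟨u, v, h, hn, rfl⟩ := hL γ hγ
    obtain ⟨p, q, hp, hq, hβγ⟩ := hβ h hn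
    exact .inl ⟨u, v, h, hn, by rw [hβγ, mapLe_append_cons_eq_treeLoop hle hT.isAcyclic hP hp hq]⟩
  · have hPΦ : P Φ = .nil := hT.isAcyclic.eq_of_isPath (hP Φ) .nil
    simpa [treeLoop, hPΦ] using hw

/-- Theorem 3.1 (graph form): every closed walk at the root `Φ` is equivalent, up to
insertion and deletion of backtracks, to a concatenation of the standard closed walks
`β_e` (tree path to the tail of a non-tree edge `e`, across `e`, tree path back)
and their reverses. -/
theorem closed_walk_is_concatenation_of_fundamental_cycles
    {V : Type*} (G T : SimpleGraph V) (hle : T ≤ G) (hGconn : G.Connected)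
    (hT : T.IsTree) (Φ : V)
    (β : ∀ ⦃u v : V⦄, G.Adj u v → ¬ T.Adj u v → G.Walk Φ Φ)
    (hβ : ∀ ⦃u v : V⦄ (h : G.Adj u v) (hn : ¬ T.Adj u v),
      ∃ (p : T.Walk Φ u) (q : T.Walk v Φ), p.IsPath ∧ q.IsPath ∧
        β h hn = ((p.mapLe hle).append (Walk.cons h (q.mapLe hle)))) :
    ∀ w : G.Walk Φ Φ, ∃ L : List (G.Walk Φ Φ),
      (∀ x ∈ L, (∃ (u v : V) (h : G.Adj u v) (hn : ¬ T.Adj u v), x = β h hn) ∨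
        (∃ (u v : V) (h : G.Adj u v) (hn : ¬ T.Adj u v), x = (β h hn).reverse)) ∧
      WalkEquiv w (L.foldr Walk.append Walk.nil) :=
  closed_walk_is_concatenation_of_fundamental_cycles_general G T hle hT Φ β hβ
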